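/- With L = I − Ã, Ã = D^{1/2} M D^{-1/2} (D diagonal positive, M = D^{-1}A), any polynomial filter g(L) = Σ_{k=0}^{K−1} θ_k L^k has entries [g(L)]_{ij} = d_i^{1/2} · ψ(P_{ij}) · d_j^{-1/2}, where P_{ij} = ([I]_{ij}, [M]_{ij}, [M^2]_{ij}, …, [M^{K−1}]_{ij}) ∈ ℝ^K and ψ : ℝ^K → ℝ is the linear functional ψ(x) = Σ_{k=0}^{K−1} θ'_k x_k with θ'_k = Σ_{r=k}^{K−1} binom(r,k)(−1)^k θ_r. -/
import Mathlib


open Matrix Finset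

lemma one_sub_pow_ring {R : Type*} [Ring R] (M : R) (r : ℕ) :
    (1 - M) ^ r = ∑ s ∈ Finset.range (r + 1), (r.choose s : ℤ) • ((-1 : R) ^ s * M ^ s) := by
  have h := (Commute.one_right (-M)).add_pow r
  rw [neg_add_eq_sub] at h
  rw [h]
  refine Finset.sum_congr rfl fun s hs => ?_
  rw [neg_pow, one_pow, mul_one, zsmul_eq_mul]
  push_cast
  exact (Nat.cast_commute (r.choose s) ((-1:R)^s * M^s)).symm.eq

/-- Entries of a polynomial spectral filter `g(L) = Σ_{k<K} θ_k L^k`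
are `[g(L)]_{ij} = √d_i · ψ(P_{ij}) · (√d_j)⁻¹`, where
`P_{ij} = ([M^0]_{ij}, …, [M^{K−1}]_{ij})` are the RRWP pseudo-coordinates and
`ψ(x) = Σ_{k<K} θ'_k x_k` is a linear kernel with
`θ'_k = Σ_{r=k}^{K−1} binom(r,k)(−1)^k θ_r`. -/
theorem stmt6 (n : ℕ) (A : Matrix (Fin n) (Fin n) ℝ)
    (hsymm : A.IsSymm) (hnn : ∀ i j, 0 ≤ A i j)
    (d : Fin n → ℝ) (hd : ∀ i, d i = ∑ j, A i j) (hdpos : ∀ i, 0 < d i)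
    (Atil M L : Matrix (Fin n) (Fin n) ℝ)
    (hAtil : Atil = Matrix.diagonal (fun i => (Real.sqrt (d i))⁻¹) * A *
      Matrix.diagonal (fun i => (Real.sqrt (d i))⁻¹))
    (hM : M = Matrix.diagonal (fun i => (d i)⁻¹) * A)
    (hL : L = 1 - Atil)
    (K : ℕ) (θ θ' : ℕ → ℝ)
    (hθ' : ∀ k, θ' k = ∑ r ∈ Finset.Ico k K, (r.choose k : ℝ) * (-1) ^ k * θ r)
    (P : Fin n → Fin n → (Fin K → ℝ))
    (hP : ∀ i j (k : Fin K), P i j k = (M ^ (k : ℕ)) i j)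
    (ψ : (Fin K → ℝ) → ℝ)
    (hψ : ∀ x, ψ x = ∑ k : Fin K, θ' (k : ℕ) * x k) :
    ∀ i j, (∑ k ∈ Finset.range K, θ k • L ^ k) i j
      = Real.sqrt (d i) * ψ (P i j) * (Real.sqrt (d j))⁻¹ := by
  have hsq : ∀ i, Real.sqrt (d i) ≠ 0 := fun i =>
    ne_of_gt (Real.sqrt_pos.mpr (hdpos i))
  set S : Matrix (Fin n) (Fin n) ℝ := Matrix.diagonal (fun i => Real.sqrt (d i)) with hS
  set T : Matrix (Fin n) (Fin n) ℝ := Matrix.diagonal (fun i => (Real.sqrt (d i))⁻¹) with hT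
  have hST : S * T = 1 := by
    rw [hS, hT, Matrix.diagonal_mul_diagonal]
    simp only [mul_inv_cancel₀ (hsq _)]
    exact Matrix.diagonal_one
  have hTS : T * S = 1 := by
    rw [hS, hT, Matrix.diagonal_mul_diagonal]
    simp only [inv_mul_cancel₀ (hsq _)]
    exact Matrix.diagonal_one
  have hSM : S * M = T * A := by
    rw [hM, hS, hT, ← Matrix.mul_assoc, Matrix.diagonal_mul_diagonal]
    have hfun : (fun i => Real.sqrt (d i) * (d i)⁻¹)
        = fun i => (Real.sqrt (d i))⁻¹ := by
      funext i
      have hdi : Real.sqrt (d i) * Real.sqrt (d i) = d i :=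
        Real.mul_self_sqrt (hdpos i).le
      have h3 := congrArg Inv.inv hdi
      rw [mul_inv] at h3
      rw [← h3, ← mul_assoc, mul_inv_cancel₀ (hsq i), one_mul]
    rw [hfun]
  -- L = S * (1 - M) * T
  have hL2 : L = S * (1 - M) * T := by
    rw [hL, hAtil, mul_sub, Matrix.mul_one, sub_mul, hST, hSM]
  have hLpow : ∀ k : ℕ, L ^ k = S * (1 - M) ^ k * T := by
    intro k
    induction k with
    | zero => simp [hST]
    | succ k ih =>
      rw [pow_succ, pow_succ, ih, hL2]
      have h1 : T * (S * (1 - M) * T) = (1 - M) * T := by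
        rw [← Matrix.mul_assoc, ← Matrix.mul_assoc, hTS, Matrix.one_mul]
      rw [Matrix.mul_assoc (S * (1 - M) ^ k) T, h1, ← Matrix.mul_assoc,
        Matrix.mul_assoc S, Matrix.mul_assoc S]
  intro i j
  have key : ∀ B : Matrix (Fin n) (Fin n) ℝ, (S * B * T) i j
      = Real.sqrt (d i) * B i j * (Real.sqrt (d j))⁻¹ := by
    intro B
    rw [hS, hT, Matrix.mul_diagonal, Matrix.diagonal_mul]
  have hLentry : ∀ k : ℕ, (L ^ k) i j
      = Real.sqrt (d i) * ((1 - M) ^ k) i j * (Real.sqrt (d j))⁻¹ := by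
    intro k; rw [hLpow k, key]
  -- entry of (1-M)^r
  have hpm : ∀ r : ℕ, ((1 - M) ^ r) i j
      = ∑ s ∈ Finset.range (r + 1), (r.choose s : ℝ) * (-1) ^ s * (M ^ s) i j := by
    intro r
    rw [one_sub_pow_ring, Matrix.sum_apply]
    refine Finset.sum_congr rfl fun s _ => ?_
    have h2 : (-1 : Matrix (Fin n) (Fin n) ℝ) = (-1 : ℝ) • 1 := by simp
    rw [h2, smul_pow, one_pow, smul_mul_assoc, one_mul]
    simp [mul_assoc]
  -- main scalar identity
  have main : ∑ r ∈ Finset.range K, θ r * ((1 - M) ^ r) i j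
      = ∑ s ∈ Finset.range K, θ' s * (M ^ s) i j := by
    simp only [hpm, Finset.mul_sum]
    have swap := Finset.sum_Ico_Ico_comm 0 K
      (fun s r => θ r * ((r.choose s : ℝ) * (-1) ^ s * (M ^ s) i j))
    simp only [← Finset.range_eq_Ico] at swap ⊢
    rw [← swap]
    refine Finset.sum_congr rfl fun s _ => ?_
    rw [hθ', Finset.sum_mul]
    refine Finset.sum_congr rfl fun r _ => by ring
  rw [Matrix.sum_apply]
  simp only [Matrix.smul_apply, smul_eq_mul, hLentry]
  rw [hψ]
  simp only [hP]
  rw [Fin.sum_univ_eq_sum_range (fun k => θ' k * (M ^ k) i j) K, ← main,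
    Finset.mul_sum, Finset.sum_mul]
  exact Finset.sum_congr rfl fun r _ => by ring
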